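/- Let K be a symmetric positive definite 3×3 block matrix with K₁₃ = 0 and K₃₁ = 0 (as in the stiffness system). Define S₂₂ = K₂₂ − K₂₁K₁₁⁻¹K₁₂ and S₃₃ = K₃₃ − K₃₂S₂₂⁻¹K₂₃. Then the (3,1) block of K⁻¹ equals S₃₃⁻¹ K₃₂ S₂₂⁻¹ K₂₁ K₁₁⁻¹. -/

import Mathlib

open Matrix

lemma posDef_toBlocks₁₁' {m n : Type*} [Fintype m] [Fintype n] [DecidableEq m] [DecidableEq n]
    {M : Matrix (m ⊕ n) (m ⊕ n) ℝ} (h : M.PosDef) : (M.toBlocks₁₁).PosDef := by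
  refine posDef_iff_dotProduct_mulVec.mpr ⟨?_, ?_⟩
  · have := h.1
    ext i j
    simpa [toBlocks₁₁, IsHermitian] using congrFun (congrFun this (Sum.inl i)) (Sum.inl j)
  · intro x hx
    have hx' : (Sum.elim x (0 : n → ℝ)) ≠ 0 := by
      intro hcon
      apply hx
      ext i
      exact congrFun hcon (Sum.inl i)
    have := (posDef_iff_dotProduct_mulVec.mp h).2 hx'
    have hM : M = fromBlocks M.toBlocks₁₁ M.toBlocks₁₂ M.toBlocks₂₁ M.toBlocks₂₂ :=
      (fromBlocks_toBlocks M).symm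
    rw [hM, fromBlocks_mulVec] at this
    simpa [star, sumElim_dotProduct_sumElim] using this

theorem inv_block_31_three_block
    (a b c : ℕ)
    (K₁₁ : Matrix (Fin a) (Fin a) ℝ) (K₁₂ : Matrix (Fin a) (Fin b) ℝ)
    (K₂₁ : Matrix (Fin b) (Fin a) ℝ) (K₂₂ : Matrix (Fin b) (Fin b) ℝ)
    (K₂₃ : Matrix (Fin b) (Fin c) ℝ) (K₃₂ : Matrix (Fin c) (Fin b) ℝ)
    (K₃₃ : Matrix (Fin c) (Fin c) ℝ)
    (K : Matrix ((Fin a ⊕ Fin b) ⊕ Fin c) ((Fin a ⊕ Fin b) ⊕ Fin c) ℝ)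
    (hK : K = Matrix.fromBlocks (Matrix.fromBlocks K₁₁ K₁₂ K₂₁ K₂₂)
      (Matrix.fromRows 0 K₂₃) (Matrix.fromCols 0 K₃₂) K₃₃)
    (hpd : K.PosDef)
    (h21 : K₂₁ = K₁₂ᵀ) (h32 : K₃₂ = K₂₃ᵀ)
    (S₂₂ S₃₃ : Matrix _ _ ℝ)
    (hS22 : S₂₂ = K₂₂ - K₂₁ * K₁₁⁻¹ * K₁₂)
    (hS33 : S₃₃ = K₃₃ - K₃₂ * S₂₂⁻¹ * K₂₃) :
    Matrix.toCols₁ (Matrix.toBlocks₂₁ K⁻¹)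
      = S₃₃⁻¹ * K₃₂ * S₂₂⁻¹ * K₂₁ * K₁₁⁻¹ := by
  subst hK
  have hA : (fromBlocks K₁₁ K₁₂ K₂₁ K₂₂).PosDef := posDef_toBlocks₁₁' hpd
  have hK11 : K₁₁.PosDef := posDef_toBlocks₁₁' hA
  haveI iK := hpd.isUnit.invertible
  haveI iA := hA.isUnit.invertible
  haveI iK11 := hK11.isUnit.invertible
  haveI iS22 : Invertible S₂₂ := by
    have := invertibleOfFromBlocks₁₁Invertible K₁₁ K₁₂ K₂₁ K₂₂
    rwa [invOf_eq_nonsing_inv, ← hS22] at this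
  have hAinv : (fromBlocks K₁₁ K₁₂ K₂₁ K₂₂)⁻¹ =
      fromBlocks (K₁₁⁻¹ + K₁₁⁻¹ * K₁₂ * S₂₂⁻¹ * K₂₁ * K₁₁⁻¹) (-(K₁₁⁻¹ * K₁₂ * S₂₂⁻¹))
        (-(S₂₂⁻¹ * K₂₁ * K₁₁⁻¹)) S₂₂⁻¹ := by
    haveI : Invertible (K₂₂ - K₂₁ * ⅟K₁₁ * K₁₂) := by
      rw [invOf_eq_nonsing_inv, ← hS22]; exact iS22
    rw [← invOf_eq_nonsing_inv, invOf_fromBlocks₁₁_eq]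
    simp only [invOf_eq_nonsing_inv, ← hS22]
  have hCAB : Matrix.fromCols (0 : Matrix (Fin c) (Fin a) ℝ) K₃₂ * (fromBlocks K₁₁ K₁₂ K₂₁ K₂₂)⁻¹ * fromRows (0 : Matrix (Fin a) (Fin c) ℝ) K₂₃
      = K₃₂ * S₂₂⁻¹ * K₂₃ := by
    rw [hAinv, fromCols_mul_fromBlocks, fromCols_mul_fromRows]
    simp [Matrix.mul_assoc]
  haveI iS33 : Invertible S₃₃ := by
    have := invertibleOfFromBlocks₁₁Invertible (fromBlocks K₁₁ K₁₂ K₂₁ K₂₂)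
      (fromRows (0 : Matrix (Fin a) (Fin c) ℝ) K₂₃) (Matrix.fromCols (0 : Matrix (Fin c) (Fin a) ℝ) K₃₂) K₃₃
    rwa [invOf_eq_nonsing_inv, hCAB, ← hS33] at this
  have h21blk : toBlocks₂₁ ((fromBlocks (fromBlocks K₁₁ K₁₂ K₂₁ K₂₂)
        (fromRows (0 : Matrix (Fin a) (Fin c) ℝ) K₂₃) (Matrix.fromCols (0 : Matrix (Fin c) (Fin a) ℝ) K₃₂) K₃₃)⁻¹)
      = -(S₃₃⁻¹ * (Matrix.fromCols (0 : Matrix (Fin c) (Fin a) ℝ) K₃₂ * (fromBlocks K₁₁ K₁₂ K₂₁ K₂₂)⁻¹)) := by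
    haveI : Invertible (K₃₃ - Matrix.fromCols (0 : Matrix (Fin c) (Fin a) ℝ) K₃₂ * ⅟(fromBlocks K₁₁ K₁₂ K₂₁ K₂₂)
        * fromRows (0 : Matrix (Fin a) (Fin c) ℝ) K₂₃) := by
      rw [invOf_eq_nonsing_inv, hCAB, ← hS33]; exact iS33
    rw [← invOf_eq_nonsing_inv, invOf_fromBlocks₁₁_eq, toBlocks_fromBlocks₂₁]
    simp only [invOf_eq_nonsing_inv, hCAB]
    rw [← hS33, Matrix.mul_assoc]
  rw [h21blk, hAinv, fromCols_mul_fromBlocks, mul_fromCols]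
  ext i j
  simp [toCols₁, fromCols, Matrix.mul_assoc]
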